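/- arXiv:2306.10648 — 7 statements merged into one kernel-verified Lean document; each statement's English description precedes it below -/
import Mathlib

section
/- The function H_pois(λ, ℓ) := E[min(Y, ℓ)] where Y ~ Poisson(λ) is concave in λ ∈ [0, ∞) for every fixed positive integer ℓ. Equivalently, its second derivative equals -e^{-λ} λ^{ℓ-1}/(ℓ-1)! which is negative for λ > 0. -/
/-!
Differentiating `Hpois (ℓ + 1) = Hpois ℓ + 1 - P(Y ≤ ℓ)` shows by induction that `Hpois ℓ` has
derivative `P(Y < ℓ) = ∑_{j<ℓ} e^{-λ} λ^j / j!`. Since `d/dλ (e^{-λ} λ^j / j!)` is the difference of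
the `(j-1)`-st and `j`-th Poisson weights, this sum telescopes on differentiation to
`-e^{-λ} λ^{ℓ-1} / (ℓ-1)!`, which is negative for `λ > 0`; hence `Hpois ℓ` is even strictly concave
on `[0, ∞)`.
-/

open Real

/-- `Hpois ℓ λ = E[min(Y, ℓ)]` for `Y ~ Poisson(λ)`, written as
`ℓ - Σ_{j=0}^{ℓ-1} (λ^j/j!) e^{-λ} (ℓ - j)`. -/
noncomputable def Hpois (ℓ : ℕ) (lam : ℝ) : ℝ :=
  (ℓ : ℝ) - ∑ j ∈ Finset.range ℓ, lam ^ j / (Nat.factorial j : ℝ) * Real.exp (-lam) * ((ℓ : ℝ) - (j : ℝ))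

open Finset Nat

noncomputable def poissonTerm (j : ℕ) (x : ℝ) : ℝ :=
  x ^ j / j ! * exp (-x)

/-- `poissonProbLt ℓ x = P(Y < ℓ)` for `Y ~ Poisson(x)`. -/
noncomputable def poissonProbLt (ℓ : ℕ) (x : ℝ) : ℝ :=
  ∑ j ∈ range ℓ, poissonTerm j x

lemma poissonTerm_pos {x : ℝ} (hx : 0 < x) (j : ℕ) : 0 < poissonTerm j x := by
  unfold poissonTerm; positivity

lemma hasDerivAt_pow_div_factorial_succ (j : ℕ) (x : ℝ) :
    HasDerivAt (fun t : ℝ => t ^ (j + 1) / (j + 1)!) (x ^ j / j !) x := by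
  refine ((hasDerivAt_pow (j + 1) x).div_const ((j + 1)! : ℝ)).congr_deriv ?_
  rw [Nat.factorial_succ]
  push_cast
  field_simp

lemma hasDerivAt_poissonTerm_zero (x : ℝ) :
    HasDerivAt (poissonTerm 0) (-poissonTerm 0 x) x := by
  have h : poissonTerm 0 = fun t => exp (-t) := by ext t; simp [poissonTerm]
  rw [h]
  simpa [poissonTerm] using (hasDerivAt_neg x).exp

lemma hasDerivAt_poissonTerm_succ (j : ℕ) (x : ℝ) :
    HasDerivAt (poissonTerm (j + 1)) (poissonTerm j x - poissonTerm (j + 1) x) x := by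
  refine ((hasDerivAt_pow_div_factorial_succ j x).mul (hasDerivAt_neg x).exp).congr_deriv ?_
  simp only [poissonTerm]
  ring

lemma hasDerivAt_poissonProbLt_succ (n : ℕ) (x : ℝ) :
    HasDerivAt (poissonProbLt (n + 1)) (-poissonTerm n x) x := by
  induction n with
  | zero =>
    have h : poissonProbLt 1 = poissonTerm 0 := by ext t; simp [poissonProbLt]
    simpa [h] using hasDerivAt_poissonTerm_zero x
  | succ n ih =>
    have hsplit : poissonProbLt (n + 2) = poissonProbLt (n + 1) + poissonTerm (n + 1) := by
      ext t; simp [poissonProbLt, sum_range_succ]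
    rw [hsplit]
    exact (ih.add (hasDerivAt_poissonTerm_succ n x)).congr_deriv (by ring)

lemma Hpois_succ (ℓ : ℕ) (x : ℝ) :
    Hpois (ℓ + 1) x = Hpois ℓ x + 1 - poissonProbLt (ℓ + 1) x := by
  simp only [Hpois, poissonProbLt, poissonTerm, sum_range_succ _ ℓ]
  push_cast
  simp only [mul_sub, mul_add, sum_sub_distrib, sum_add_distrib, mul_one]
  ring

lemma hasDerivAt_Hpois (ℓ : ℕ) (x : ℝ) : HasDerivAt (Hpois ℓ) (poissonProbLt ℓ x) x := by
  induction ℓ with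
  | zero =>
    have h : Hpois 0 = fun _ => 0 := by ext t; simp [Hpois]
    simpa [h, poissonProbLt] using hasDerivAt_const x (0 : ℝ)
  | succ n ih =>
    rw [show Hpois (n + 1) = fun t => Hpois n t + 1 - poissonProbLt (n + 1) t from
      funext (Hpois_succ n)]
    refine ((ih.add_const 1).sub (hasDerivAt_poissonProbLt_succ n x)).congr_deriv ?_
    simp [poissonProbLt, sum_range_succ]

lemma deriv_deriv_Hpois_succ (m : ℕ) :
    deriv (deriv (Hpois (m + 1))) = fun x => -poissonTerm m x := by
  have hd : deriv (Hpois (m + 1)) = poissonProbLt (m + 1) :=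
    funext fun x => (hasDerivAt_Hpois _ x).deriv
  rw [hd]
  exact funext fun x => (hasDerivAt_poissonProbLt_succ m x).deriv

/-- `H_pois(·, ℓ)` is concave on `[0, ∞)` for every positive integer `ℓ`; equivalently its
second derivative equals `-e^{-λ} λ^{ℓ-1}/(ℓ-1)!`, which is negative for `λ > 0`. -/
theorem hpois_concave (ℓ : ℕ) (hℓ : 1 ≤ ℓ) :
    ConcaveOn ℝ (Set.Ici (0 : ℝ)) (Hpois ℓ) ∧
    ∀ lam : ℝ, 0 < lam →
      deriv (deriv (Hpois ℓ)) lam = -Real.exp (-lam) * lam ^ (ℓ - 1) / (Nat.factorial (ℓ - 1) : ℝ) ∧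
      deriv (deriv (Hpois ℓ)) lam < 0 := by
  obtain ⟨m, rfl⟩ : ∃ m, ℓ = m + 1 := ⟨ℓ - 1, by omega⟩
  have hneg : ∀ x > 0, deriv (deriv (Hpois (m + 1))) x < 0 := fun x hx => by
    simpa [deriv_deriv_Hpois_succ] using poissonTerm_pos hx m
  refine ⟨?_, fun lam hlam => ⟨?_, hneg lam hlam⟩⟩
  · have hcont : Continuous (Hpois (m + 1)) :=
      continuous_iff_continuousAt.2 fun x => (hasDerivAt_Hpois _ x).continuousAt
    refine (strictConcaveOn_of_deriv2_neg (convex_Ici 0) hcont.continuousOn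
      fun x hx => ?_).concaveOn
    rw [interior_Ici] at hx
    simpa using hneg x hx
  · simp only [deriv_deriv_Hpois_succ, poissonTerm, Nat.add_sub_cancel]
    ring
end

section
/- Let z_1,...,z_n be independent Bernoulli random variables with parameters q_1,...,q_n and set λ = Σ q_i and Z = Σ z_i. Then for any positive integer ℓ, E[min(Z, ℓ)] ≥ λ(1 - λ/2). -/
/-!
Since `min(Z, ℓ) ≥ 1` whenever `Z ≥ 1`, the expectation dominates `P[Z ≥ 1] = 1 - ∏ᵢ (1 - qᵢ)`,
and the second Bonferroni inequality `∏ᵢ (1 - qᵢ) ≤ 1 - λ + λ² / 2` finishes the bound.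
-/

open Finset Real

/-- Probability of the outcome `z` of `n` independent Bernoulli random variables with
parameters `q i`. -/
noncomputable def berWeight {n : ℕ} (q : Fin n → ℝ) (z : Fin n → Bool) : ℝ :=
  ∏ i, if z i then q i else 1 - q i

/-- Number of successes in outcome `z`. -/
def count {n : ℕ} (z : Fin n → Bool) : ℕ := ∑ i, if z i then 1 else 0

/-- `Hber q ℓ = E[min(Σᵢ zᵢ, ℓ)]` for independent `zᵢ ~ Ber(q i)`. -/
noncomputable def Hber {n : ℕ} (q : Fin n → ℝ) (ℓ : ℕ) : ℝ :=
  ∑ z : Fin n → Bool, berWeight q z * min ((count z : ℝ)) (ℓ : ℝ)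

/-- `Ptail q m = P[Σᵢ zᵢ ≥ m]` for independent `zᵢ ~ Ber(q i)`. -/
noncomputable def Ptail {n : ℕ} (q : Fin n → ℝ) (m : ℕ) : ℝ :=
  ∑ z ∈ Finset.univ.filter (fun z : Fin n → Bool => m ≤ count z), berWeight q z

theorem Finset.prod_one_sub_le_one_sub_sum_add_sq_div_two {ι : Type*} (s : Finset ι)
    {f : ι → ℝ} (hf : ∀ i ∈ s, f i ∈ Set.Icc (0 : ℝ) 1) :
    ∏ i ∈ s, (1 - f i) ≤ 1 - ∑ i ∈ s, f i + (∑ i ∈ s, f i) ^ 2 / 2 := by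
  classical
  induction s using Finset.induction with
  | empty => simp
  | @insert a s ha ih =>
    rw [prod_insert ha, sum_insert ha]
    obtain ⟨hfa₀, hfa₁⟩ := hf a (mem_insert_self a s)
    have hf' : ∀ i ∈ s, f i ∈ Set.Icc (0 : ℝ) 1 := fun i hi => hf i (mem_insert_of_mem hi)
    have hsum : 0 ≤ ∑ i ∈ s, f i := sum_nonneg fun i hi => (hf' i hi).1
    nlinarith [mul_le_mul_of_nonneg_left (ih hf') (sub_nonneg.2 hfa₁)]

section Bernoulli

variable {n : ℕ} (q : Fin n → ℝ)

theorem sum_berWeight : ∑ z, berWeight q z = 1 := by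
  have hfactor := Fintype.prod_sum fun i (b : Bool) => if b then q i else 1 - q i
  simpa [berWeight] using hfactor.symm

theorem berWeight_nonneg (hq : ∀ i, q i ∈ Set.Icc (0 : ℝ) 1) (z : Fin n → Bool) :
    0 ≤ berWeight q z :=
  prod_nonneg fun i _ => by
    obtain ⟨hq₀, hq₁⟩ := hq i
    split <;> linarith

theorem berWeight_false : berWeight q (fun _ => false) = ∏ i, (1 - q i) := by
  simp [berWeight]

theorem count_eq_zero_iff {z : Fin n → Bool} : count z = 0 ↔ z = fun _ => false := by
  simp [count, funext_iff]

theorem Ptail_one_eq : Ptail q 1 = 1 - ∏ i, (1 - q i) := by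
  have hzero : univ.filter (fun z : Fin n → Bool => ¬ 1 ≤ count z) = {fun _ => false} := by
    ext z
    simp [count_eq_zero_iff]
  have htotal := sum_filter_add_sum_filter_not univ (fun z => 1 ≤ count z) (berWeight q)
  rw [sum_berWeight, hzero, sum_singleton, berWeight_false] at htotal
  rw [Ptail]
  linarith

theorem Ptail_one_le_Hber (hq : ∀ i, q i ∈ Set.Icc (0 : ℝ) 1) {ℓ : ℕ} (hℓ : 1 ≤ ℓ) :
    Ptail q 1 ≤ Hber q ℓ := by
  rw [Ptail, sum_filter, Hber]
  refine sum_le_sum fun z _ => ?_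
  split_ifs with hz
  · have hmin : (1 : ℝ) ≤ min (count z : ℝ) ℓ :=
      le_min (by exact_mod_cast hz) (by exact_mod_cast hℓ)
    exact le_mul_of_one_le_right (berWeight_nonneg q hq z) hmin
  · exact mul_nonneg (berWeight_nonneg q hq z) (le_min (Nat.cast_nonneg _) (Nat.cast_nonneg _))

end Bernoulli

/-- For independent `z_i ~ Ber(q_i)` with `λ = Σ q_i` and any positive integer `ℓ`,
`E[min(Σ z_i, ℓ)] ≥ λ(1 - λ/2)`. -/
theorem hber_lower (n : ℕ) (q : Fin n → ℝ) (hq : ∀ i, q i ∈ Set.Icc (0 : ℝ) 1)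
    (lam : ℝ) (hlam : lam = ∑ i, q i) (ℓ : ℕ) (hℓ : 1 ≤ ℓ) :
    lam * (1 - lam / 2) ≤ Hber q ℓ := by
  have hbonferroni := univ.prod_one_sub_le_one_sub_sum_add_sq_div_two fun i _ => hq i
  rw [← hlam] at hbonferroni
  calc lam * (1 - lam / 2) ≤ 1 - ∏ i, (1 - q i) := by linarith
    _ = Ptail q 1 := (Ptail_one_eq q).symm
    _ ≤ Hber q ℓ := Ptail_one_le_Hber q hq hℓ
end

section
/- Let z_1,...,z_n be independent Bernoulli random variables with parameters q_1,...,q_n such that λ = Σ q_i ≥ 1. Then for any positive integer ℓ, E[min(Σ z_i, ℓ)] ≥ 1/2. -/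
/-! Since `ℓ ≥ 1`, `E[min(Z, ℓ)] ≥ E[min(Z, 1)] = P[Z ≥ 1] = 1 - ∏ᵢ (1 - qᵢ)`, and
`∏ᵢ (1 - qᵢ) ≤ exp (-Σᵢ qᵢ) ≤ exp (-1) < 1/2`. -/

open Finset Real

section Bernoulli

variable {n : ℕ} (q : Fin n → ℝ)

theorem Hber_mono (hq : ∀ i, q i ∈ Set.Icc (0 : ℝ) 1) : Monotone (Hber q) := fun _ _ h =>
  sum_le_sum fun z _ =>
    mul_le_mul_of_nonneg_left (min_le_min_left _ (by exact_mod_cast h)) (berWeight_nonneg q hq z)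

theorem Hber_one : Hber q 1 = 1 - ∏ i, (1 - q i) := by
  have hmin (z : Fin n → Bool) :
      min (count z : ℝ) ((1 : ℕ) : ℝ) = 1 - if z = (fun _ => false) then 1 else 0 := by
    simp_rw [← count_eq_zero_iff]
    rcases Nat.eq_zero_or_pos (count z) with h | h
    · simp [h]
    · simp [h.ne', Nat.one_le_cast.mpr h]
  simp only [Hber, hmin, mul_sub, mul_one, mul_ite, mul_zero, sum_sub_distrib, sum_berWeight,
    sum_ite_eq', mem_univ, ite_true, berWeight_false]

end Bernoulli

theorem prod_one_sub_le_exp_neg_sum {ι : Type*} (s : Finset ι) (x : ι → ℝ)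
    (hx : ∀ i ∈ s, x i ≤ 1) : ∏ i ∈ s, (1 - x i) ≤ exp (-∑ i ∈ s, x i) := by
  rw [← sum_neg_distrib, exp_sum]
  exact prod_le_prod (fun i hi => sub_nonneg.mpr (hx i hi)) fun i _ => one_sub_le_exp_neg _

/-- For independent `z_i ~ Ber(q_i)` with `Σ q_i ≥ 1` and any positive integer `ℓ`,
`E[min(Σ z_i, ℓ)] ≥ 1/2`. -/
theorem hber_half (n : ℕ) (q : Fin n → ℝ) (hq : ∀ i, q i ∈ Set.Icc (0 : ℝ) 1)
    (hlam : 1 ≤ ∑ i, q i) (ℓ : ℕ) (hℓ : 1 ≤ ℓ) :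
    (1 : ℝ) / 2 ≤ Hber q ℓ := by
  have hprod : ∏ i, (1 - q i) ≤ 1 / 2 :=
    calc ∏ i, (1 - q i) ≤ exp (-∑ i, q i) :=
          prod_one_sub_le_exp_neg_sum _ _ fun i _ => (hq i).2
      _ ≤ exp (-1) := exp_le_exp.mpr (neg_le_neg hlam)
      _ ≤ 1 / 2 := exp_neg_one_lt_half.le
  calc (1 : ℝ) / 2 ≤ 1 - ∏ i, (1 - q i) := by linarith
    _ = Hber q 1 := (Hber_one q).symm
    _ ≤ Hber q ℓ := Hber_mono q hq hℓ
end

section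
/- For any real α ≥ 3.4, the series Σ_{i=1}^∞ exp(-i²/(2α + i)) is at most 0.85·α. -/
/-!
For `y ≤ 2α` the exponent `y² / (2α + y)` is at least `y² / (4α)`, and for `y ≥ 2α` it is at least
`y / 2`. Hence for `α ≥ 4.6` the series is at most the half-line Gaussian integral `√(πα)` plus the
geometric tail `∑_{i ≥ 10} e^{-i/2} < 0.03`, and `√(πα) + 0.03 ≤ 0.85 α`. For `α ≤ 4.6` the terms
increase with `α`, so the series is at most its value at `α = 4.6`: its first nine terms are
evaluated through `e^{-q} ≤ (1 + q/64)^{-64}` and its tail is the same geometric tail, which gives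
`2.86 ≤ 0.85 · 3.4`.
-/

open Real Set

lemma exp_neg_le_inv_one_add_div_pow {q : ℝ} (hq : 0 ≤ q) (n : ℕ) :
    exp (-q) ≤ ((1 + q / n) ^ n)⁻¹ := by
  rw [exp_neg]
  rcases n.eq_zero_or_pos with rfl | hn
  · simpa using inv_le_one_of_one_le₀ (one_le_exp hq)
  · gcongr
    calc (1 + q / n) ^ n ≤ exp (q / n) ^ n := by gcongr; linarith [add_one_le_exp (q / n)]
      _ = exp q := by rw [← exp_nat_mul]; field_simp

lemma exp_neg_five_div_one_sub_exp_neg_half_le : exp (-5) / (1 - exp (-(1 / 2))) ≤ 0.03 := by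
  have h5 : exp (-5) ≤ 0.0082 :=
    (exp_neg_le_inv_one_add_div_pow (by norm_num) 64).trans (by norm_num)
  have hhalf : exp (-(1 / 2)) ≤ 0.608 :=
    (exp_neg_le_inv_one_add_div_pow (by norm_num) 64).trans (by norm_num)
  rw [div_le_iff₀ (by linarith)]
  linarith

lemma hasSum_exp_neg_nat_add_div_two (N : ℕ) :
    HasSum (fun k : ℕ => exp (-(((k + N : ℕ) : ℝ) + 1) / 2))
      (exp (-((N : ℝ) + 1) / 2) / (1 - exp (-(1 / 2)))) := by
  have hr : exp (-(1 / 2)) < 1 := exp_lt_one_iff.2 (by norm_num)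
  have hterm (k : ℕ) :
      exp (-(((k + N : ℕ) : ℝ) + 1) / 2) = exp (-((N : ℝ) + 1) / 2) * exp (-(1 / 2)) ^ k := by
    rw [← exp_nat_mul, ← exp_add]
    push_cast
    ring_nf
  simp_rw [hterm, div_eq_mul_inv]
  exact (hasSum_geometric_of_lt_one (exp_nonneg _) hr).mul_left _

lemma tsum_exp_neg_nat_add_nine_div_two_le :
    ∑' k : ℕ, exp (-(((k + 9 : ℕ) : ℝ) + 1) / 2) ≤ 0.03 := by
  rw [(hasSum_exp_neg_nat_add_div_two 9).tsum_eq]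
  convert exp_neg_five_div_one_sub_exp_neg_half_le using 3
  norm_num

section Comparison

variable {α y : ℝ}

lemma exp_neg_sq_div_add_le_exp_neg_div_two (hy : 0 < y) (hα : 0 ≤ α) (hαy : 2 * α ≤ y) :
    exp (-y ^ 2 / (2 * α + y)) ≤ exp (-y / 2) := by
  rw [exp_le_exp, neg_div, neg_div, neg_le_neg_iff, div_le_div_iff₀ (by norm_num) (by linarith)]
  nlinarith

lemma exp_neg_sq_div_add_le_exp_neg_mul_sq (hy : 0 < y) (hyα : y ≤ 2 * α) :
    exp (-y ^ 2 / (2 * α + y)) ≤ exp (-(4 * α)⁻¹ * y ^ 2) := by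
  rw [exp_le_exp, neg_div, neg_mul, neg_le_neg_iff, inv_mul_eq_div]
  exact div_le_div_of_nonneg_left (sq_nonneg y) (by linarith) (by linarith)

lemma exp_neg_sq_div_add_le_exp_neg_mul_sq_add (hy : 0 < y) (hα : 0 ≤ α) :
    exp (-y ^ 2 / (2 * α + y)) ≤ exp (-(4 * α)⁻¹ * y ^ 2) + exp (-y / 2) := by
  rcases le_total y (2 * α) with hyα | hαy
  · exact le_add_of_le_of_nonneg (exp_neg_sq_div_add_le_exp_neg_mul_sq hy hyα) (exp_nonneg _)
  · exact le_add_of_nonneg_of_le (exp_nonneg _) (exp_neg_sq_div_add_le_exp_neg_div_two hy hα hαy)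

lemma exp_neg_sq_div_add_le_exp_two_mul_sub (hpos : 0 < 2 * α + y) :
    exp (-y ^ 2 / (2 * α + y)) ≤ exp (2 * α - y) := by
  rw [exp_le_exp, div_le_iff₀ hpos]
  nlinarith [sq_nonneg α]

lemma exp_neg_sq_div_add_le_of_le {β : ℝ} (hpos : 0 < 2 * α + y) (hαβ : α ≤ β) :
    exp (-y ^ 2 / (2 * α + y)) ≤ exp (-y ^ 2 / (2 * β + y)) := by
  rw [exp_le_exp, neg_div, neg_div, neg_le_neg_iff]
  exact div_le_div_of_nonneg_left (sq_nonneg y) hpos (by linarith)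

end Comparison

lemma antitoneOn_exp_neg_mul_sq {b : ℝ} (hb : 0 ≤ b) :
    AntitoneOn (fun x : ℝ => exp (-b * x ^ 2)) (Ici 0) := by
  intro x hx y _ hxy
  simp only [exp_le_exp, neg_mul, neg_le_neg_iff]
  gcongr

lemma summable_exp_neg_mul_sq_succ {b : ℝ} (hb : 0 < b) :
    Summable fun n : ℕ => exp (-b * ((n : ℝ) + 1) ^ 2) := by
  have := (antitoneOn_exp_neg_mul_sq hb.le).summable_of_integrableOn_Ioi_zero
    (integrable_exp_neg_mul_sq hb).integrableOn fun _ _ => exp_nonneg _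
  exact_mod_cast (summable_nat_add_iff 1).2 this

lemma tsum_exp_neg_mul_sq_succ_le {b : ℝ} (hb : 0 < b) :
    ∑' n : ℕ, exp (-b * ((n : ℝ) + 1) ^ 2) ≤ √(π / b) / 2 := by
  rw [← integral_gaussian_Ioi]
  exact_mod_cast (antitoneOn_exp_neg_mul_sq hb.le).tsum_add_one_le_integral
    (integrable_exp_neg_mul_sq hb).integrableOn fun _ _ => exp_nonneg _

lemma tsum_le_tsum_add_tsum_nat_add {f g h : ℕ → ℝ} (N : ℕ) (hf : Summable f) (hg : Summable g)
    (hh : Summable fun k => h (k + N)) (hhead : ∀ n < N, f n ≤ g n)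
    (htail : ∀ n, N ≤ n → f n ≤ g n + h n) :
    ∑' n, f n ≤ ∑' n, g n + ∑' k, h (k + N) := by
  have hgN := (summable_nat_add_iff N).2 hg
  rw [← hf.sum_add_tsum_nat_add N, ← hg.sum_add_tsum_nat_add N, add_assoc, ← hgN.tsum_add hh]
  refine add_le_add (Finset.sum_le_sum fun n hn => hhead n (Finset.mem_range.1 hn)) ?_
  exact ((summable_nat_add_iff N).2 hf).tsum_le_tsum (fun k => htail _ (by omega)) (hgN.add hh)

section Series

variable {α : ℝ}

lemma summable_exp_neg_sq_div_add (hα : 0 ≤ α) :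
    Summable fun n : ℕ => exp (-((n : ℝ) + 1) ^ 2 / (2 * α + ((n : ℝ) + 1))) := by
  refine (summable_exp_neg_nat.mul_left (exp (2 * α))).of_nonneg_of_le (fun _ => exp_nonneg _)
    fun n => ?_
  calc _ ≤ exp (2 * α - ((n : ℝ) + 1)) := exp_neg_sq_div_add_le_exp_two_mul_sub (by positivity)
    _ ≤ exp (2 * α) * exp (-n) := by rw [← exp_add]; gcongr; linarith

lemma tsum_exp_neg_sq_div_add_le_of_le {β : ℝ} (hα : 0 ≤ α) (hαβ : α ≤ β) :
    ∑' n : ℕ, exp (-((n : ℝ) + 1) ^ 2 / (2 * α + ((n : ℝ) + 1))) ≤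
      ∑' n : ℕ, exp (-((n : ℝ) + 1) ^ 2 / (2 * β + ((n : ℝ) + 1))) :=
  (summable_exp_neg_sq_div_add hα).tsum_le_tsum
    (fun _ => exp_neg_sq_div_add_le_of_le (by positivity) hαβ)
    (summable_exp_neg_sq_div_add (hα.trans hαβ))

lemma tsum_exp_neg_sq_div_add_le_sum_range_add (hα : 0 ≤ α) (N : ℕ) (hN : 2 * α ≤ N + 1) :
    ∑' n : ℕ, exp (-((n : ℝ) + 1) ^ 2 / (2 * α + ((n : ℝ) + 1))) ≤
      ∑ n ∈ Finset.range N, exp (-((n : ℝ) + 1) ^ 2 / (2 * α + ((n : ℝ) + 1))) +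
        ∑' k : ℕ, exp (-(((k + N : ℕ) : ℝ) + 1) / 2) := by
  have hF := summable_exp_neg_sq_div_add hα
  rw [← hF.sum_add_tsum_nat_add N]
  refine add_le_add le_rfl (((summable_nat_add_iff N).2 hF).tsum_le_tsum (fun k => ?_)
    (hasSum_exp_neg_nat_add_div_two N).summable)
  exact exp_neg_sq_div_add_le_exp_neg_div_two (by positivity) hα (by push_cast; linarith)

lemma tsum_exp_neg_sq_div_add_le_tsum_add (hα : 0 < α) (N : ℕ) (hN : (N : ℝ) ≤ 2 * α) :
    ∑' n : ℕ, exp (-((n : ℝ) + 1) ^ 2 / (2 * α + ((n : ℝ) + 1))) ≤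
      ∑' n : ℕ, exp (-(4 * α)⁻¹ * ((n : ℝ) + 1) ^ 2) +
        ∑' k : ℕ, exp (-(((k + N : ℕ) : ℝ) + 1) / 2) :=
  tsum_le_tsum_add_tsum_nat_add (h := fun n : ℕ => exp (-((n : ℝ) + 1) / 2)) N
    (summable_exp_neg_sq_div_add hα.le) (summable_exp_neg_mul_sq_succ (by positivity))
    (hasSum_exp_neg_nat_add_div_two N).summable
    (fun n hn => exp_neg_sq_div_add_le_exp_neg_mul_sq (by positivity)
      (le_trans (by exact_mod_cast hn) hN))
    (fun _ _ => exp_neg_sq_div_add_le_exp_neg_mul_sq_add (by positivity) hα.le)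

end Series

lemma sum_range_nine_exp_neg_sq_div_add_le :
    ∑ n ∈ Finset.range 9, exp (-((n : ℝ) + 1) ^ 2 / (2 * 4.6 + ((n : ℝ) + 1))) ≤ 2.83 := by
  calc _ ≤ ∑ n ∈ Finset.range 9,
          ((1 + ((n : ℝ) + 1) ^ 2 / (2 * 4.6 + ((n : ℝ) + 1)) / (64 : ℕ)) ^ 64)⁻¹ :=
        Finset.sum_le_sum fun n _ => by
          rw [neg_div]; exact exp_neg_le_inv_one_add_div_pow (by positivity) 64
    _ ≤ 2.83 := by norm_num [Finset.sum_range_succ]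

lemma tsum_exp_neg_sq_div_add_le_of_le_four_point_six {α : ℝ} (h₁ : 3.4 ≤ α) (h₂ : α ≤ 4.6) :
    ∑' n : ℕ, exp (-((n : ℝ) + 1) ^ 2 / (2 * α + ((n : ℝ) + 1))) ≤ 0.85 * α := by
  calc _ ≤ ∑' n : ℕ, exp (-((n : ℝ) + 1) ^ 2 / (2 * 4.6 + ((n : ℝ) + 1))) :=
        tsum_exp_neg_sq_div_add_le_of_le (by linarith) h₂
    _ ≤ _ := tsum_exp_neg_sq_div_add_le_sum_range_add (by norm_num) 9 (by norm_num)
    _ ≤ 2.83 + 0.03 :=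
        add_le_add sum_range_nine_exp_neg_sq_div_add_le tsum_exp_neg_nat_add_nine_div_two_le
    _ ≤ 0.85 * α := by linarith

lemma tsum_exp_neg_sq_div_add_le_of_four_point_six_le {α : ℝ} (hα : 4.6 ≤ α) :
    ∑' n : ℕ, exp (-((n : ℝ) + 1) ^ 2 / (2 * α + ((n : ℝ) + 1))) ≤ 0.85 * α := by
  have hsqrt : √(π / (4 * α)⁻¹) / 2 ≤ 0.85 * α - 0.03 := by
    rw [div_le_iff₀ two_pos, sqrt_le_iff]
    refine ⟨by linarith, ?_⟩
    rw [div_inv_eq_mul]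
    nlinarith [pi_lt_d2]
  calc _ ≤ _ := tsum_exp_neg_sq_div_add_le_tsum_add (by linarith) 9 (by norm_num; linarith)
    _ ≤ √(π / (4 * α)⁻¹) / 2 + 0.03 :=
        add_le_add (tsum_exp_neg_mul_sq_succ_le (by positivity))
          tsum_exp_neg_nat_add_nine_div_two_le
    _ ≤ 0.85 * α := by linarith

/-- For any real `α ≥ 3.4`, `Σ_{i=1}^∞ exp(-i²/(2α + i)) ≤ 0.85·α`. -/
theorem series_le (α : ℝ) (hα : (3.4 : ℝ) ≤ α) :
    ∑' i : ℕ, Real.exp (-((i : ℝ) + 1) ^ 2 / (2 * α + ((i : ℝ) + 1))) ≤ 0.85 * α := by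
  rcases le_total α 4.6 with hlow | hhigh
  · exact tsum_exp_neg_sq_div_add_le_of_le_four_point_six hα hlow
  · exact tsum_exp_neg_sq_div_add_le_of_four_point_six_le hhigh
end

section
/- Let q_1,...,q_n ∈ [0, δ] with δ ∈ (0,1), and set s = -Σ ln(1 - q_i) and λ = Σ q_i. Then 0 ≤ (1 - e^{-s}) - (1 - e^{-λ}) ≤ δ · (1 - e^{-s}). -/
/-!
Write `s = Σ aᵢ` with `aᵢ = -log (1 - qᵢ)`. The bounds `qᵢ ≤ aᵢ ≤ qᵢ / (1 - qᵢ) ≤ qᵢ / (1 - δ)`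
give `λ ≤ s ≤ λ / (1 - δ)`. The lower bound yields `e^{-s} ≤ e^{-λ}`; the upper bound and
convexity of `exp` on the segment `[-s, 0]` give `e^{-λ} ≤ e^{-(1-δ)s} ≤ (1 - δ) e^{-s} + δ`,
which is the second inequality rearranged.
-/

open Real Finset

namespace Real

theorem le_neg_log_one_sub {x : ℝ} (hx : x < 1) : x ≤ -log (1 - x) := by
  linarith [log_le_sub_one_of_pos (sub_pos.2 hx)]

theorem one_sub_mul_neg_log_one_sub_le {x δ : ℝ} (hx : 0 ≤ x) (hxδ : x ≤ δ) (hδ : δ < 1) :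
    (1 - δ) * -log (1 - x) ≤ x := by
  have h1x : 0 < 1 - x := by linarith
  have hlog : -log (1 - x) ≤ x / (1 - x) := by
    have := one_sub_inv_le_log_of_pos h1x
    have hdiv : x / (1 - x) = (1 - x)⁻¹ - 1 := by field_simp; ring
    linarith
  calc (1 - δ) * -log (1 - x) ≤ (1 - x) * (x / (1 - x)) := by
        gcongr
        linarith [le_neg_log_one_sub (hxδ.trans_lt hδ)]
    _ = x := mul_div_cancel₀ x h1x.ne'

theorem exp_mul_le_mul_exp_add_one_sub {t : ℝ} (ht₀ : 0 ≤ t) (ht₁ : t ≤ 1) (x : ℝ) :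
    exp (t * x) ≤ t * exp x + (1 - t) := by
  simpa using convexOn_exp.2 (Set.mem_univ x) (Set.mem_univ 0) ht₀ (sub_nonneg.2 ht₁)
    (add_sub_cancel t 1)

end Real

section SumLog

variable {ι : Type*} (S : Finset ι) (q : ι → ℝ)

theorem sum_le_neg_sum_log_one_sub (hq : ∀ i ∈ S, q i < 1) :
    ∑ i ∈ S, q i ≤ -∑ i ∈ S, log (1 - q i) := by
  rw [← sum_neg_distrib]
  exact sum_le_sum fun i hi => le_neg_log_one_sub (hq i hi)

theorem one_sub_mul_neg_sum_log_one_sub_le {δ : ℝ} (hδ : δ < 1)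
    (hq : ∀ i ∈ S, q i ∈ Set.Icc 0 δ) :
    (1 - δ) * -∑ i ∈ S, log (1 - q i) ≤ ∑ i ∈ S, q i := by
  rw [← sum_neg_distrib, mul_sum]
  exact sum_le_sum fun i hi => one_sub_mul_neg_log_one_sub_le (hq i hi).1 (hq i hi).2 hδ

end SumLog

/-- For `q_i ∈ [0, δ]`, `δ ∈ (0,1)`, with `s = -Σ ln(1 - q_i)` and `λ = Σ q_i`:
`0 ≤ (1 - e^{-s}) - (1 - e^{-λ}) ≤ δ·(1 - e^{-s})`, i.e. the Poisson approximation of the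
single-item Bernoulli objective satisfies `0 ≤ H_ber - H_pois ≤ δ·H_ber`. -/
theorem single_item_poisson (n : ℕ) (q : Fin n → ℝ) (δ : ℝ) (hδ : δ ∈ Set.Ioo (0 : ℝ) 1)
    (hq : ∀ i, q i ∈ Set.Icc (0 : ℝ) δ)
    (s lam : ℝ) (hs : s = -∑ i, Real.log (1 - q i)) (hlam : lam = ∑ i, q i) :
    0 ≤ (1 - Real.exp (-s)) - (1 - Real.exp (-lam)) ∧
    (1 - Real.exp (-s)) - (1 - Real.exp (-lam)) ≤ δ * (1 - Real.exp (-s)) := by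
  obtain ⟨hδ₀, hδ₁⟩ := hδ
  have hlam_le_s : lam ≤ s := hs ▸ hlam ▸
    sum_le_neg_sum_log_one_sub univ q fun i _ => (hq i).2.trans_lt hδ₁
  have hs_le_lam : (1 - δ) * s ≤ lam := hs ▸ hlam ▸
    one_sub_mul_neg_sum_log_one_sub_le univ q hδ₁ fun i _ => hq i
  have hexp_lam : exp (-lam) ≤ (1 - δ) * exp (-s) + δ := by
    calc exp (-lam) ≤ exp ((1 - δ) * -s) := exp_le_exp.2 (by linarith)
      _ ≤ (1 - δ) * exp (-s) + (1 - (1 - δ)) :=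
        exp_mul_le_mul_exp_add_one_sub (by linarith) (by linarith) (-s)
      _ = (1 - δ) * exp (-s) + δ := by ring
  constructor
  · linarith [exp_le_exp.2 (neg_le_neg hlam_le_s)]
  · linarith
end

section
/- Let z ~ Ber(q) and y ~ Pois(q) with q ∈ [0, 1] be coupled so that z = 0 implies y = 0 and the joint marginals are correct. Then E[|z - y|] ≤ 2.5·q². -/
/-!
Since `z = 0` forces `y = 0`, all the mass off `(0, 0)` sits on `z = 1`, where `|z - y| = |1 - y|`.
At `y = 0` that mass is `e^{-q} - (1 - q) ≤ q²/2`; at `y = j ≥ 2` it is at most the Poisson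
weight `e^{-q} q^j / j! ≤ q² / 2^{j-1}`, and `∑_{j ≥ 2} (j - 1) / 2^{j-1} = 2`.
-/

open Real
open scoped Nat

theorem exp_neg_le_one_sub_add_sq_div_two {x : ℝ} (hx : 0 ≤ x) :
    exp (-x) ≤ 1 - x + x ^ 2 / 2 := by
  let g : ℝ → ℝ := fun t ↦ 1 - t + t ^ 2 / 2 - exp (-t)
  have hg : ∀ t, HasDerivAt g (t - 1 + exp (-t)) t := fun t ↦
    HasDerivAt.congr_deriv (((hasDerivAt_id t).const_sub 1).add
      ((hasDerivAt_pow 2 t).div_const 2) |>.sub (hasDerivAt_neg t).exp)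
      (by simp only [Nat.add_one_sub_one, pow_one]; ring)
  have hmono : Monotone g := monotone_of_deriv_nonneg (fun t ↦ (hg t).differentiableAt)
    fun t ↦ (hg t).deriv ▸ by linarith [add_one_le_exp (-t)]
  have h := hmono hx
  simp only [g, sub_zero, ne_eq, OfNat.ofNat_ne_zero, not_false_eq_true, zero_pow, zero_div,
    add_zero, neg_zero, exp_zero, sub_self, sub_nonneg] at h
  linarith

theorem two_pow_succ_le_factorial_add_two (k : ℕ) : 2 ^ (k + 1) ≤ (k + 2)! := by
  have h : 1 ! * 2 ^ (k + 1) ≤ (1 + (k + 1))! :=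
    Nat.factorial_mul_pow_le_factorial (m := 1) (n := k + 1)
  rwa [Nat.factorial_one, one_mul, show 1 + (k + 1) = k + 2 by omega] at h

theorem exp_neg_mul_pow_div_factorial_le {q : ℝ} (hq0 : 0 ≤ q) (hq1 : q ≤ 1) (k : ℕ) :
    exp (-q) * q ^ (k + 2) / (k + 2)! ≤ q ^ 2 * (1 / 2) ^ (k + 1) := by
  have hfact : (2 : ℝ) ^ (k + 1) ≤ (k + 2)! := by
    exact_mod_cast two_pow_succ_le_factorial_add_two k
  have hnum : exp (-q) * q ^ (k + 2) ≤ q ^ 2 :=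
    (mul_le_of_le_one_left (by positivity) (exp_le_one_iff.2 (by linarith))).trans
      (pow_le_pow_of_le_one hq0 hq1 (by omega))
  calc exp (-q) * q ^ (k + 2) / (k + 2)! ≤ q ^ 2 / 2 ^ (k + 1) := by gcongr
    _ = q ^ 2 * (1 / 2) ^ (k + 1) := by rw [one_div_pow, mul_one_div]

theorem tsum_le_add_of_le_of_succ_le {f g : ℕ → ℝ} {a b : ℝ} (hf : ∀ n, 0 ≤ f n)
    (h0 : f 0 ≤ a) (hg : HasSum g b) (hsucc : ∀ n, f (n + 1) ≤ g n) :
    ∑' n, f n ≤ a + b := by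
  have hfs : Summable fun n ↦ f (n + 1) :=
    Summable.of_nonneg_of_le (fun n ↦ hf _) hsucc hg.summable
  rw [((summable_nat_add_iff 1).1 hfs).tsum_eq_zero_add]
  exact add_le_add h0 (hasSum_le hsucc hfs.hasSum hg)

theorem tsum_bool_prod_eq_tsum_true {α M : Type*} [AddCommMonoid M] [TopologicalSpace M]
    {f : Bool × α → M} (hf : ∀ a, f (false, a) = 0) : ∑' x, f x = ∑' a, f (true, a) := by
  refine ((Prod.mk_right_injective true).tsum_eq ?_).symm
  rintro ⟨_ | _, a⟩ h
  · exact absurd (hf a) h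
  · exact ⟨a, rfl⟩

theorem coupling_expectation_general (q : ℝ) (hq : q ∈ Set.Icc (0 : ℝ) 1)
    (p : Bool → ℕ → ℝ)
    (hpos : ∀ b j, 0 ≤ p b j)
    (hmargz0 : ∑' j : ℕ, p false j = 1 - q)
    (hmargy : ∀ j : ℕ, p false j + p true j = Real.exp (-q) * q ^ j / (Nat.factorial j : ℝ))
    (hcouple : ∀ j : ℕ, j ≠ 0 → p false j = 0) :
    ∑' bj : Bool × ℕ, p bj.1 bj.2 * |(if bj.1 then (1 : ℝ) else 0) - (bj.2 : ℝ)| ≤ 2.5 * q ^ 2 := by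
  obtain ⟨hq0, hq1⟩ := hq
  have hp_false_zero : p false 0 = 1 - q := by rw [← hmargz0, tsum_eq_single 0 hcouple]
  have hp_true_zero : p true 0 = exp (-q) - (1 - q) :=
    eq_sub_of_add_eq' (by simpa [hp_false_zero] using hmargy 0)
  have hp_true_succ : ∀ k, p true (k + 1) = exp (-q) * q ^ (k + 1) / (k + 1)! := fun k ↦ by
    simpa [hcouple (k + 1) k.succ_ne_zero] using hmargy (k + 1)
  have htail := (hasSum_coe_mul_geometric_of_norm_lt_one (r := (1 / 2 : ℝ)) (by norm_num)).mul_left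
    (q ^ 2)
  rw [tsum_bool_prod_eq_tsum_true fun j ↦ by
    rcases eq_or_ne j 0 with rfl | hj
    · simp
    · simp [hcouple j hj]]
  simp only [↓reduceIte]
  refine (tsum_le_add_of_le_of_succ_le (a := q ^ 2 / 2) (fun j ↦ mul_nonneg (hpos _ _)
    (abs_nonneg _)) ?_ htail ?_).trans_eq (by ring)
  · rw [hp_true_zero, Nat.cast_zero, sub_zero, abs_one, mul_one]
    linarith [exp_neg_le_one_sub_add_sq_div_two hq0]
  · rintro (_ | k)
    · simp
    · rw [hp_true_succ, abs_of_nonpos (by push_cast; linarith), neg_sub]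
      calc exp (-q) * q ^ (k + 2) / (k + 2)! * ((k + 2 : ℕ) - 1)
          ≤ q ^ 2 * (1 / 2) ^ (k + 1) * ((k + 2 : ℕ) - 1) := by
            gcongr
            · push_cast; linarith
            · exact exp_neg_mul_pow_div_factorial_le hq0 hq1 k
        _ = q ^ 2 * ((k + 1 : ℕ) * (1 / 2) ^ (k + 1)) := by push_cast; ring

/-- Let `z ~ Ber(q)` and `y ~ Pois(q)` be coupled (joint law `p`) so that `z = 0` implies
`y = 0` and the marginals are correct. Then `E[|z - y|] ≤ 2.5·q²`. -/
theorem coupling_expectation (q : ℝ) (hq : q ∈ Set.Icc (0 : ℝ) 1)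
    (p : Bool → ℕ → ℝ)
    (hpos : ∀ b j, 0 ≤ p b j)
    (hsum : Summable fun bj : Bool × ℕ => p bj.1 bj.2)
    (hmargz0 : ∑' j : ℕ, p false j = 1 - q)
    (hmargz1 : ∑' j : ℕ, p true j = q)
    (hmargy : ∀ j : ℕ, p false j + p true j = Real.exp (-q) * q ^ j / (Nat.factorial j : ℝ))
    (hcouple : ∀ j : ℕ, j ≠ 0 → p false j = 0) :
    ∑' bj : Bool × ℕ, p bj.1 bj.2 * |(if bj.1 then (1 : ℝ) else 0) - (bj.2 : ℝ)| ≤ 2.5 * q ^ 2 :=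
  coupling_expectation_general q hq p hpos hmargz0 hmargy hcouple
end

section
/- Given n finite-support distributions D_1,...,D_n, parameters ℓ* ≥ 0, δ ∈ (0,1), and ε ∈ [ℓ*/(δk), 1) a multiple of 1/k, there exist a threshold η ≥ 0 and a set S of size exactly εk such that: (a) for all 0 ≤ τ ≤ η, Σ_{i∈S} P[v_i ≥ τ] ≥ ℓ*; and (b) for all i ∉ S, P[v_i > η] < δ. -/
/-!
Let `η` be the largest point of `{0} ∪ A` at which at least `m` bidders reach `η` with
probability at least `δ`. Since the strict tail `P[v_i > η]` equals the tail `P[v_i ≥ b]` at the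
next support point `b > η`, at most `m` bidders exceed `η` with probability `δ`, while at least
`m` reach `η`; any `S` of size `m` squeezed between these two sets works, because
`ℓ* ≤ δ m = δ εk` and tails only grow as the threshold drops from `η` to `τ`.
-/

open Finset

theorem Finset.filter_lt_eq_empty_or_exists_eq_filter_le {α : Type*} [LinearOrder α]
    (A : Finset α) (x : α) :
    A.filter (x < ·) = ∅ ∨ ∃ b ∈ A, x < b ∧ A.filter (x < ·) = A.filter (b ≤ ·) := by
  rcases (A.filter (x < ·)).eq_empty_or_nonempty with hempty | hne
  · exact Or.inl hempty
  obtain ⟨hbA, hxb⟩ := mem_filter.mp (min'_mem _ hne)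
  refine Or.inr ⟨_, hbA, hxb, filter_congr fun a ha => ⟨fun hxa => ?_, hxb.trans_le⟩⟩
  exact min'_le _ a (mem_filter.mpr ⟨ha, hxa⟩)

theorem Finset.antitone_sum_filter_le {α M : Type*} [LinearOrder α] [AddCommMonoid M]
    [PartialOrder M] [IsOrderedAddMonoid M] {A : Finset α} {w : α → M} (hw : ∀ a ∈ A, 0 ≤ w a) :
    Antitone fun t => ∑ a ∈ A with t ≤ a, w a := fun _ _ hst =>
  sum_le_sum_of_subset_of_nonneg (monotone_filter_right _ fun _ _ => hst.trans)
    fun a ha _ => hw a (mem_filter.mp ha).1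

section Threshold

variable {ι : Type*} [Fintype ι] (p : ι → ℝ → ℝ) (A : Finset ℝ) (δ : ℝ)

noncomputable def likelyAtLeast (t : ℝ) : Finset ι :=
  univ.filter fun i => δ ≤ ∑ a ∈ A with t ≤ a, p i a

noncomputable def likelyAbove (t : ℝ) : Finset ι :=
  univ.filter fun i => δ ≤ ∑ a ∈ A with t < a, p i a

variable {p A δ}

theorem likelyAbove_subset_likelyAtLeast (hp0 : ∀ i a, 0 ≤ p i a) (t : ℝ) :
    likelyAbove p A δ t ⊆ likelyAtLeast p A δ t :=
  monotone_filter_right _ fun i _ h => h.trans <|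
    sum_le_sum_of_subset_of_nonneg (monotone_filter_right _ fun _ _ => le_of_lt)
      fun a _ _ => hp0 i a

theorem exists_card_likelyAbove_le_le_card_likelyAtLeast (hδ : 0 < δ) {m : ℕ} (h0 : m ≤ #(likelyAtLeast p A δ 0)) :
    ∃ η, 0 ≤ η ∧ m ≤ #(likelyAtLeast p A δ η) ∧ #(likelyAbove p A δ η) ≤ m := by
  set F := (insert 0 A).filter fun t => m ≤ #(likelyAtLeast p A δ t)
  have h0F : (0 : ℝ) ∈ F := mem_filter.mpr ⟨mem_insert_self _ _, h0⟩
  set η := F.max' ⟨0, h0F⟩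
  have hηF : m ≤ #(likelyAtLeast p A δ η) := (mem_filter.mp (F.max'_mem _)).2
  refine ⟨η, F.le_max' 0 h0F, hηF, ?_⟩
  rcases A.filter_lt_eq_empty_or_exists_eq_filter_le η with hempty | ⟨b, hbA, hηb, hnext⟩
  · have : likelyAbove p A δ η = ∅ := by
      simp only [likelyAbove, hempty, sum_empty, filter_eq_empty_iff]
      exact fun _ _ => not_le.mpr hδ
    simp [this]
  · have hbF : b ∉ F := fun hbF => (F.le_max' b hbF).not_gt hηb
    simp only [likelyAbove, hnext]
    exact (by simpa [F, hbA] using hbF : #(likelyAtLeast p A δ b) < m).le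

end Threshold

theorem small_bidder_set_general (n k : ℕ) (hk : 0 < k) (hkn : k ≤ n)
    (A : Finset ℝ) (hA : ∀ a ∈ A, 0 ≤ a)
    (p : Fin n → ℝ → ℝ) (hp0 : ∀ i a, 0 ≤ p i a)
    (hp1 : ∀ i, ∑ a ∈ A, p i a = 1)
    (ℓs : ℝ)
    (δ : ℝ) (hδ : δ ∈ Set.Ioo (0 : ℝ) 1)
    (m : ℕ) (hε1 : ℓs / (δ * k) ≤ (m : ℝ) / k) (hε2 : (m : ℝ) / k < 1) :
    ∃ η : ℝ, 0 ≤ η ∧ ∃ S : Finset (Fin n), S.card = m ∧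
      (∀ τ : ℝ, 0 ≤ τ → τ ≤ η →
        ℓs ≤ ∑ i ∈ S, ∑ a ∈ A.filter (fun a => τ ≤ a), p i a) ∧
      (∀ i, i ∉ S → ∑ a ∈ A.filter (fun a => η < a), p i a < δ) := by
  obtain ⟨hδ0, hδ1⟩ := hδ
  have hk' : (0 : ℝ) < k := Nat.cast_pos.mpr hk
  have hmn : m ≤ n := (Nat.cast_lt.mp ((div_lt_one hk').mp hε2)).le.trans hkn
  have hℓs : ℓs ≤ δ * m := by
    rwa [div_mul_eq_div_div, div_le_div_iff_of_pos_right hk', div_le_iff₀ hδ0, mul_comm] at hε1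
  have hall : likelyAtLeast p A δ 0 = univ :=
    filter_true_of_mem fun i _ => by rw [filter_true_of_mem hA, hp1]; exact hδ1.le
  obtain ⟨η, hη0, hmC, hDm⟩ := exists_card_likelyAbove_le_le_card_likelyAtLeast hδ0
    (by simpa [hall] : m ≤ #(likelyAtLeast p A δ 0))
  obtain ⟨S, hDS, hSC, hScard⟩ :=
    exists_subsuperset_card_eq (likelyAbove_subset_likelyAtLeast hp0 η) hDm hmC
  refine ⟨η, hη0, S, hScard, fun τ _ hτη => ?_, fun i hiS => ?_⟩
  · calc ℓs ≤ ∑ _i ∈ S, δ := by simpa [hScard, mul_comm] using hℓs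
      _ ≤ _ := sum_le_sum fun i hi =>
        (mem_filter.mp (hSC hi)).2.trans (antitone_sum_filter_le (fun a _ => hp0 i a) hτη)
  · exact not_le.mp fun h => hiS (hDS (mem_filter.mpr ⟨mem_univ i, h⟩))

/-- Small Bidder Set: given `n` finite-support distributions (pmfs `p i` supported on the
common finite set `A ⊆ [0,∞)`), parameters `ℓ* ≥ 0`, `δ ∈ (0,1)`, and `ε = m/k ∈ [ℓ*/(δk), 1)`
a multiple of `1/k`, there exist a threshold `η ≥ 0` and a set `S` of size exactly `εk = m`
such that (a) for all `0 ≤ τ ≤ η`, `Σ_{i∈S} P[v_i ≥ τ] ≥ ℓ*`, and (b) for all `i ∉ S`,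
`P[v_i > η] < δ`. -/
theorem small_bidder_set (n k : ℕ) (hk : 0 < k) (hkn : k ≤ n)
    (A : Finset ℝ) (hA : ∀ a ∈ A, 0 ≤ a)
    (p : Fin n → ℝ → ℝ) (hp0 : ∀ i a, 0 ≤ p i a)
    (hsupp : ∀ i a, a ∉ A → p i a = 0)
    (hp1 : ∀ i, ∑ a ∈ A, p i a = 1)
    (ℓs : ℝ) (hℓs0 : 0 ≤ ℓs) (hℓsk : ℓs < k)
    (δ : ℝ) (hδ : δ ∈ Set.Ioo (0 : ℝ) 1)
    (m : ℕ) (hε1 : ℓs / (δ * k) ≤ (m : ℝ) / k) (hε2 : (m : ℝ) / k < 1) :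
    ∃ η : ℝ, 0 ≤ η ∧ ∃ S : Finset (Fin n), S.card = m ∧
      (∀ τ : ℝ, 0 ≤ τ → τ ≤ η →
        ℓs ≤ ∑ i ∈ S, ∑ a ∈ A.filter (fun a => τ ≤ a), p i a) ∧
      (∀ i, i ∉ S → ∑ a ∈ A.filter (fun a => η < a), p i a < δ) :=
  small_bidder_set_general n k hk hkn A hA p hp0 hp1 ℓs δ hδ m hε1 hε2
end
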